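/- arXiv:2101.02343 — 9 statements merged into one kernel-verified Lean document; each statement's English description precedes it below -/
import Mathlib

section
/- For positive integers a_1,...,a_t with each a_i ≥ 1, let τ = ∏ a_i. There exists a t × τ array A, with columns indexed by the product set {1,...,a_1} × ... × {1,...,a_t}, where row j assigns to column x the tuple x with its j-th coordinate deleted, such that for every set of ℓ columns (1 ≤ ℓ ≤ t), at least t+1−ℓ rows separate those ℓ columns (i.e., in at least t+1−ℓ rows the ℓ columns contain pairwise distinct symbols). -/
/-!
Row `j` of the array identifies two columns iff they agree off coordinate `j`, so it separates
`S` unless two distinct points of `S` differ only in coordinate `j`. At most `|S| - 1`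
coordinates fail this way: if `j` does, overwriting coordinate `j` of every point by a constant
merges two points of `S`, while every other failing coordinate still fails for the image, so
induction on `|S|` applies.
-/

open Finset Function

variable {ι : Type*} {β : ι → Type*}

def SeparatesAt (S : Finset (∀ i, β i)) (j : ι) : Prop :=
  ∀ x ∈ S, ∀ y ∈ S, x ≠ y → ∃ i, i ≠ j ∧ x i ≠ y i

theorem not_separatesAt_iff {S : Finset (∀ i, β i)} {j : ι} :
    ¬SeparatesAt S j ↔ ∃ x ∈ S, ∃ y ∈ S, x ≠ y ∧ ∀ i, i ≠ j → x i = y i := by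
  simp only [SeparatesAt, not_forall, not_exists, not_and, not_not, exists_prop]

variable [DecidableEq ι] [DecidableEq (∀ i, β i)]

theorem card_image_update_lt {S : Finset (∀ i, β i)} {j : ι} {x y : ∀ i, β i}
    (hx : x ∈ S) (hy : y ∈ S) (hxy : x ≠ y) (hagree : ∀ i, i ≠ j → x i = y i) (c : β j) :
    #(S.image (update · j c)) < #S := by
  refine lt_of_le_of_ne card_image_le fun hcard => hxy (injOn_of_card_image_eq hcard hx hy ?_)
  ext i
  by_cases hij : i = j
  · subst hij; simp
  · simp [update_of_ne hij, hagree i hij]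

theorem not_separatesAt_image_update {S : Finset (∀ i, β i)} {j j' : ι} (hj : j' ≠ j)
    (c : β j) (hS : ¬SeparatesAt S j') :
    ¬SeparatesAt (S.image (update · j c)) j' := by
  obtain ⟨x, hx, y, hy, hxy, hagree⟩ := not_separatesAt_iff.1 hS
  have hxy' : x j' ≠ y j' := fun h => hxy (funext fun i => by
    by_cases hij : i = j'
    · subst hij; exact h
    · exact hagree i hij)
  refine not_separatesAt_iff.2 ⟨_, mem_image_of_mem _ hx, _, mem_image_of_mem _ hy, ?_, ?_⟩
  · exact fun h => hxy' (by simpa [update_of_ne hj] using congrFun h j')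
  · intro i hij'
    by_cases hij : i = j
    · subst hij; simp
    · simp [update_of_ne hij, hagree i hij']

open scoped Classical in
theorem card_filter_not_separatesAt_le [Fintype ι] (S : Finset (∀ i, β i)) :
    #(univ.filter fun j => ¬SeparatesAt S j) ≤ #S - 1 := by
  induction hn : #S using Nat.strong_induction_on generalizing S with
  | _ n ih =>
    subst hn
    obtain hempty | ⟨j, hj⟩ := (univ.filter fun j => ¬SeparatesAt S j).eq_empty_or_nonempty
    · simp [hempty]
    obtain ⟨x, hx, y, hy, hxy, hagree⟩ := not_separatesAt_iff.1 (mem_filter.1 hj).2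
    set S' := S.image (update · j (x j))
    have hlt : #S' < #S := card_image_update_lt hx hy hxy hagree (x j)
    have hS' : 0 < #S' := card_pos.2 ⟨_, mem_image_of_mem _ hx⟩
    have herase : (univ.filter fun j => ¬SeparatesAt S j).erase j ⊆
        univ.filter fun j => ¬SeparatesAt S' j := by
      intro j' hj'
      obtain ⟨hj'j, hj'S⟩ := mem_erase.1 hj'
      exact mem_filter.2 ⟨mem_univ _,
        not_separatesAt_image_update hj'j (x j) (mem_filter.1 hj'S).2⟩
    have hbad := card_le_card herase
    rw [card_erase_of_mem hj] at hbad
    have hbad' := ih _ hlt S' rfl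
    omega

theorem stmt_0_general (t : ℕ) (a : Fin t → ℕ)
    (S : Finset (∀ i : Fin t, Fin (a i))) (hS1 : 1 ≤ S.card) :
    t + 1 - S.card ≤ (Finset.univ.filter (fun j : Fin t =>
      ∀ x ∈ S, ∀ y ∈ S, x ≠ y → ∃ i, i ≠ j ∧ x i ≠ y i)).card := by
  classical
  have hsplit := card_filter_add_card_filter_not (s := univ) (SeparatesAt S)
  have hbad := card_filter_not_separatesAt_le S
  rw [card_univ, Fintype.card_fin] at hsplit
  calc t + 1 - #S ≤ #(univ.filter (SeparatesAt S)) := by omega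
    _ = _ := by congr

/-- Blackburn's easy construction. Row `j` of the array (columns indexed by
tuples) identifies two columns iff they agree in all coordinates other than `j`; thus row `j`
separates a set of columns iff any two distinct columns of the set differ in some coordinate
other than `j`.  Every set of `ℓ` columns (`1 ≤ ℓ ≤ t`) is separated in at least `t+1-ℓ` rows. -/
theorem stmt_0 (t : ℕ) (ht : 1 ≤ t) (a : Fin t → ℕ) (ha : ∀ i, 1 ≤ a i)
    (S : Finset (∀ i : Fin t, Fin (a i))) (hS1 : 1 ≤ S.card) (hSt : S.card ≤ t) :
    t + 1 - S.card ≤ (Finset.univ.filter (fun j : Fin t =>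
      ∀ x ∈ S, ∀ y ∈ S, x ≠ y → ∃ i, i ≠ j ∧ x i ≠ y i)).card :=
  stmt_0_general t a S hS1
end

section
/- Every multigraph with t edges and no loops such that t < C(p+1, 2) = p(p+1)/2 admits a proper vertex colouring with p colours (adjacent vertices get distinct colours). -/
/-!
Colour the simple graph underlying the multigraph with the least possible number `k` of colours.
Any two colour classes are then joined by an edge, since otherwise they could be merged, so the
graph has at least `C(k, 2)` distinct edges. Hence `C(k, 2) ≤ t < C(p + 1, 2)`, i.e. `k ≤ p`.
-/

open Finset Fintype

namespace SimpleGraph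

variable {V α : Type*} {G : SimpleGraph V}

theorem Coloring.exists_adj_of_not_colorable [Fintype α] (C : G.Coloring α)
    (hC : ¬ G.Colorable (card α - 1)) {i j : α} (hij : i ≠ j) :
    ∃ x y, G.Adj x y ∧ C x = i ∧ C y = j := by
  classical
  by_contra! h
  let merged : G.Coloring {c // c ≠ j} :=
    Coloring.mk (fun x => if hx : C x = j then ⟨i, hij⟩ else ⟨C x, hx⟩) fun {x y} hxy => by
      have hne := C.valid hxy
      by_cases hx : C x = j <;> by_cases hy : C y = j
      · exact absurd (hx.trans hy.symm) hne
      · simpa [hx, hy, eq_comm] using h y x hxy.symm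
      · simpa [hx, hy] using h x y hxy
      · simpa [hx, hy] using hne
  exact hC (by simpa [card_subtype_compl] using merged.colorable)

theorem Coloring.choose_card_le_card_edgeFinset [Fintype G.edgeSet] [Fintype α]
    (C : G.Coloring α) (hC : ¬ G.Colorable (card α - 1)) :
    (card α).choose 2 ≤ #G.edgeFinset := by
  classical
  rw [← Sym2.card_subtype_not_diag, Fintype.card_subtype]
  refine card_le_card_of_surjOn (Sym2.map C) fun z hz => ?_
  induction z using Sym2.inductionOn with
  | hf i j =>
    obtain ⟨x, y, hxy, rfl, rfl⟩ := C.exists_adj_of_not_colorable hC (by simpa using hz)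
    exact ⟨s(x, y), by simpa using hxy, rfl⟩

theorem colorable_of_card_edgeFinset_lt_choose [Fintype V] [Fintype G.edgeSet] {p : ℕ}
    (h : #G.edgeFinset < (p + 1).choose 2) : G.Colorable p := by
  classical
  by_contra hp
  have hex : ∃ k, G.Colorable k := ⟨_, G.colorable_of_fintype⟩
  obtain ⟨C⟩ : G.Colorable (Nat.find hex) := Nat.find_spec hex
  have hpk : p < Nat.find hex := lt_of_not_ge fun hkp => hp ((Nat.find_spec hex).mono hkp)
  have hmin : ¬ G.Colorable (Nat.find hex - 1) := Nat.find_min hex (by omega)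
  have hk := C.choose_card_le_card_edgeFinset (by simpa using hmin)
  have hpk' := Nat.choose_le_choose 2 (show p + 1 ≤ card (Fin (Nat.find hex)) by simpa using hpk)
  omega

theorem card_edgeFinset_fromEdgeSet_range_le [DecidableEq V] {E : Type*} [Fintype E]
    (f : E → Sym2 V) : #(fromEdgeSet (Set.range f)).edgeFinset ≤ card E :=
  calc #(fromEdgeSet (Set.range f)).edgeFinset
      ≤ #(univ.image f) := card_le_card fun z hz => by
        rw [mem_edgeFinset, edgeSet_fromEdgeSet] at hz
        simpa using hz.1
    _ ≤ card E := card_image_le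

end SimpleGraph

/-- every loopless multigraph with `t` edges, `t < C(p+1,2)`, has a proper
vertex colouring with `p` colours. -/
theorem stmt_5 (V E : Type) [Fintype V] [Fintype E] (t p : ℕ)
    (hE : Fintype.card E = t) (ends : E → Sym2 V)
    (hloop : ∀ e, ¬ (ends e).IsDiag) (ht : t < (p + 1).choose 2) :
    ∃ col : V → Fin p, ∀ e x y, ends e = s(x, y) → col x ≠ col y := by
  classical
  let G := SimpleGraph.fromEdgeSet (Set.range ends)
  obtain ⟨C⟩ : G.Colorable p := SimpleGraph.colorable_of_card_edgeFinset_lt_choose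
    ((SimpleGraph.card_edgeFinset_fromEdgeSet_range_le ends).trans_lt (hE ▸ ht))
  refine ⟨C, fun e x y hexy => C.valid ?_⟩
  have hxy : x ≠ y := by simpa [hexy] using hloop e
  exact (SimpleGraph.fromEdgeSet_adj _).mpr ⟨⟨e, hexy⟩, hxy⟩
end

section
/- Every PHF(4;k,4,4) satisfies k ≤ 5; that is, if a 4 × k array on 4 symbols has the property that for every 4 columns some row contains four distinct symbols on those columns, then k ≤ 5. -/
/-!
For a row `f` on `n + 2` columns and `n` symbols, call columns `u ≠ v` adjacent when `f` is
injective on the other `n` columns. Injectivity there makes `f` onto, so the symbol `f v` also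
occurs at a column `b ∉ {u, v}`; swapping `v` and `b` shows that `u` is adjacent to `b`, and every
neighbour of `u` must meet the collision `{v, b}`. Hence all degrees are `0` or `2`, and only the
at most four columns whose symbol is repeated can have positive degree, so a row contributes
total degree at most `8`. A perfect hash family makes the rows' graphs cover the complete graph,
whose degree `n + 1` is odd for even `n`; by parity each vertex then has total degree at least
`n + 2`. For `n = 4` this asks for `36 ≤ 8 · 4`.
-/

open Finset Fintype Function SimpleGraph

variable {ι α β : Type*}

def IsPerfectHashFamily (A : ι → α → β) (t : ℕ) : Prop :=
  ∀ s : Finset α, #s = t → ∃ r, Set.InjOn (A r) s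

theorem isPerfectHashFamily_of_forall_injective {t : ℕ} (A : ι → α → β)
    (h : ∀ cols : Fin t → α, Injective cols → ∃ r, Injective (A r ∘ cols)) :
    IsPerfectHashFamily A t := by
  intro s hs
  let e : s ≃ Fin t := s.equivFinOfCardEq hs
  obtain ⟨r, hr⟩ := h (fun i => e.symm i) (Subtype.val_injective.comp e.symm.injective)
  refine ⟨r, fun x hx y hy hxy => ?_⟩
  simpa using @hr (e ⟨x, hx⟩) (e ⟨y, hy⟩) (by simpa using hxy)

theorem SimpleGraph.card_sub_one_le_sum_degree [Fintype ι] [Fintype α] [DecidableEq α]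
    (G : ι → SimpleGraph α) [∀ r, DecidableRel (G r).Adj]
    (hG : ∀ v w, v ≠ w → ∃ r, (G r).Adj v w) (v : α) :
    card α - 1 ≤ ∑ r, (G r).degree v :=
  calc card α - 1 = #({v}ᶜ : Finset α) := by rw [card_compl, card_singleton]
    _ ≤ #(univ.biUnion fun r => (G r).neighborFinset v) :=
      card_le_card fun w hw => by
        obtain ⟨r, hr⟩ := hG v w (Ne.symm (by simpa using hw))
        exact mem_biUnion.2 ⟨r, mem_univ r, (G r).mem_neighborFinset v w |>.2 hr⟩
    _ ≤ ∑ r, (G r).degree v := card_biUnion_le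

def separationGraph (f : α → β) : SimpleGraph α where
  Adj v w := v ≠ w ∧ Set.InjOn f {v, w}ᶜ
  symm := ⟨fun _ _ h => ⟨h.1.symm, Set.pair_comm _ _ ▸ h.2⟩⟩
  loopless := ⟨fun _ h => h.1 rfl⟩

noncomputable instance (f : α → β) : DecidableRel (separationGraph f).Adj := Classical.decRel _

theorem eq_or_eq_of_injOn_compl_pair {f : α → β} {v w x y : α} (hf : Set.InjOn f {v, w}ᶜ)
    (hxy : x ≠ y) (hfxy : f x = f y) : x = v ∨ x = w ∨ y = v ∨ y = w := by
  by_contra! h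
  exact hxy (hf (by simp [h.1, h.2.1]) (by simp [h.2.2.1, h.2.2.2]) hfxy)

theorem injOn_compl_pair_of_eq [DecidableEq α] {f : α → β} {v w b : α}
    (hf : Set.InjOn f {v, w}ᶜ) (hbv : b ≠ v) (hvw : v ≠ w) (hfb : f b = f w) :
    Set.InjOn f {v, b}ᶜ := by
  have hswap : f ∘ Equiv.swap w b = f := by
    funext x
    rcases eq_or_ne x w with rfl | hxw
    · simp [hfb]
    rcases eq_or_ne x b with rfl | hxb
    · simp [hfb]
    simp [Equiv.swap_apply_of_ne_of_ne hxw hxb]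
  have himage : Equiv.swap w b '' {v, w}ᶜ = {v, b}ᶜ := by
    rw [Equiv.image_compl, Set.image_pair, Equiv.swap_apply_of_ne_of_ne hvw hbv.symm,
      Equiv.swap_apply_left]
  exact himage ▸ (hswap.symm ▸ hf : Set.InjOn (f ∘ Equiv.swap w b) {v, w}ᶜ).image_of_comp

namespace separationGraph

variable [Fintype α] [DecidableEq α] {f : α → β} {v w : α}

theorem neighborFinset_eq (hvw : (separationGraph f).Adj v w) {b : α} (hbv : b ≠ v)
    (hbw : b ≠ w) (hfb : f b = f w) : (separationGraph f).neighborFinset v = {w, b} := by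
  ext u
  simp only [mem_neighborFinset, mem_insert, mem_singleton]
  constructor
  · intro hvu
    rcases eq_or_eq_of_injOn_compl_pair hvu.2 (Ne.symm hbw) hfb.symm with h | h | h | h
    · exact absurd h.symm hvw.1
    · exact Or.inl h.symm
    · exact absurd h hbv
    · exact Or.inr h.symm
  · rintro (rfl | rfl)
    · exact hvw
    · exact ⟨hbv.symm, injOn_compl_pair_of_eq hvw.2 hbv hvw.1 hfb⟩

variable [Fintype β]

theorem exists_ne_ne_eq (hcard : card α = card β + 2) (hvw : (separationGraph f).Adj v w)
    (c : β) : ∃ u, u ≠ v ∧ u ≠ w ∧ f u = c := by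
  have hinj : Set.InjOn f ↑({v, w}ᶜ : Finset α) := by rw [coe_compl, coe_pair]; exact hvw.2
  have hsurj := surjOn_of_injOn_of_card_le f (fun x _ => mem_univ (f x)) hinj
    (t := univ) (by rw [card_compl, card_pair hvw.1, card_univ]; omega)
  obtain ⟨u, hu, rfl⟩ := hsurj (mem_univ c)
  simp only [coe_compl, coe_pair, Set.mem_compl_iff, Set.mem_insert_iff, Set.mem_singleton_iff,
    not_or] at hu
  exact ⟨u, hu.1, hu.2, rfl⟩

theorem degree_eq_two (hcard : card α = card β + 2) (hvw : (separationGraph f).Adj v w) :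
    (separationGraph f).degree v = 2 := by
  obtain ⟨b, hbv, hbw, hfb⟩ := exists_ne_ne_eq hcard hvw (f w)
  rw [← card_neighborFinset_eq_degree, neighborFinset_eq hvw hbv hbw hfb, card_pair hbw.symm]

theorem degree_eq_zero_or_two (hcard : card α = card β + 2) (v : α) :
    (separationGraph f).degree v = 0 ∨ (separationGraph f).degree v = 2 := by
  refine (Nat.eq_zero_or_pos _).imp_right fun h => ?_
  obtain ⟨w, hvw⟩ := (separationGraph f).degree_pos_iff_exists_adj v |>.1 h
  exact degree_eq_two hcard hvw

theorem mem_of_degree_ne_zero (hcard : card α = card β + 2) (hvw : (separationGraph f).Adj v w)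
    {a b : α} (hav : a ≠ v) (haw : a ≠ w) (hfa : f a = f v) (hbv : b ≠ v) (hbw : b ≠ w)
    (hfb : f b = f w) {x : α} (hx : (separationGraph f).degree x ≠ 0) :
    x ∈ ({v, w, a, b} : Finset α) := by
  obtain ⟨y, hxy⟩ :=
    (separationGraph f).degree_pos_iff_exists_adj x |>.1 (Nat.pos_of_ne_zero hx)
  obtain ⟨u, hux, -, hfu⟩ := exists_ne_ne_eq hcard hxy (f x)
  simp only [mem_insert, mem_singleton]
  by_contra! hx'
  have hxvw : x ∈ ({v, w} : Set α)ᶜ := by simp [hx'.1, hx'.2.1]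
  rcases eq_or_eq_of_injOn_compl_pair hvw.2 hux.symm hfu.symm with h | h | h | h
  · exact hx'.1 h
  · exact hx'.2.1 h
  · exact hx'.2.2.1 (hvw.2 hxvw (by simp [hav, haw]) (by rw [hfa, ← h, hfu]))
  · exact hx'.2.2.2 (hvw.2 hxvw (by simp [hbv, hbw]) (by rw [hfb, ← h, hfu]))

theorem sum_degree_le_eight (hcard : card α = card β + 2) :
    ∑ x, (separationGraph f).degree x ≤ 8 := by
  rcases em (∃ v w, (separationGraph f).Adj v w) with ⟨v, w, hvw⟩ | hedge
  swap
  · have hzero : ∀ x, (separationGraph f).degree x = 0 := fun x =>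
      Nat.eq_zero_of_not_pos fun h =>
        hedge ⟨x, (separationGraph f).degree_pos_iff_exists_adj x |>.1 h⟩
    simp [hzero]
  obtain ⟨a, hav, haw, hfa⟩ := exists_ne_ne_eq hcard hvw (f v)
  obtain ⟨b, hbv, hbw, hfb⟩ := exists_ne_ne_eq hcard hvw (f w)
  calc ∑ x, (separationGraph f).degree x = ∑ x ∈ {v, w, a, b}, (separationGraph f).degree x :=
        (sum_subset (subset_univ _) fun x _ hx => by
          by_contra h
          exact hx (mem_of_degree_ne_zero hcard hvw hav haw hfa hbv hbw hfb h)).symm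
    _ ≤ ∑ x ∈ {v, w, a, b}, 2 := sum_le_sum fun x _ => by
        rcases degree_eq_zero_or_two hcard x (f := f) with h | h <;> omega
    _ = 2 * #{v, w, a, b} := by rw [sum_const, smul_eq_mul, mul_comm]
    _ ≤ 8 := by have := card_le_four (a := v) (b := w) (c := a) (d := b); omega

end separationGraph

theorem IsPerfectHashFamily.sq_le [Fintype ι] [Fintype α] [DecidableEq α] [Fintype β]
    {A : ι → α → β} {n : ℕ} (hA : IsPerfectHashFamily A n) (hβ : card β = n)
    (hα : card α = n + 2) (hn : Even n) : (n + 2) ^ 2 ≤ 8 * card ι := by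
  have hcard : card α = card β + 2 := by omega
  have hcover : ∀ u v, u ≠ v → ∃ r, (separationGraph (A r)).Adj u v := fun u v huv => by
    obtain ⟨r, hr⟩ := hA {u, v}ᶜ (by rw [card_compl, card_pair huv]; omega)
    exact ⟨r, huv, by rwa [coe_compl, coe_pair] at hr⟩
  have hdeg : ∀ v, n + 2 ≤ ∑ r, (separationGraph (A r)).degree v := fun v => by
    have hle := card_sub_one_le_sum_degree _ hcover v
    have heven : Even (∑ r, (separationGraph (A r)).degree v) := even_sum _ fun r _ => by
      rcases separationGraph.degree_eq_zero_or_two hcard v (f := A r) with h | h <;> simp [h]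
    obtain ⟨m, hm⟩ := hn
    obtain ⟨l, hl⟩ := heven
    omega
  calc (n + 2) ^ 2 = ∑ v : α, (n + 2) := by simp [hα, sq]
    _ ≤ ∑ v, ∑ r, (separationGraph (A r)).degree v := sum_le_sum fun v _ => hdeg v
    _ = ∑ r, ∑ v, (separationGraph (A r)).degree v := sum_comm
    _ ≤ ∑ r : ι, 8 := sum_le_sum fun r _ => separationGraph.sum_degree_le_eight hcard
    _ = 8 * card ι := by simp [mul_comm]

/-- every `PHF(4;k,4,4)` has `k ≤ 5`. -/
theorem stmt_7 (k : ℕ) (A : Fin 4 → Fin k → Fin 4)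
    (h : ∀ cols : Fin 4 → Fin k, Function.Injective cols →
      ∃ r : Fin 4, Function.Injective fun i => A r (cols i)) :
    k ≤ 5 := by
  by_contra! hk
  have hA : IsPerfectHashFamily (fun r => A r ∘ Fin.castLE hk) 4 :=
    isPerfectHashFamily_of_forall_injective _ fun cols hcols =>
      h _ ((Fin.castLE_injective hk).comp hcols)
  have := hA.sq_le (Fintype.card_fin 4) (Fintype.card_fin 6) (by decide)
  simp at this
end

section
/- For positive integers a_1 ≥ a_2, the 3 × (a_1 a_2) array with columns indexed by {0,...,a_1−1} × {0,...,a_2−1}, where column (a,b) has entries a in row 1, (a+b mod a_1) in row 2, and b in row 3, is a fractal DHHF(3; a_1 a_2, (a_1, a_1, a_2), 3, 2): every partition of ℓ ≤ 3 of its columns into min(2,ℓ) classes is separated by at least 4−ℓ rows. -/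
/-!
Any two rows of the array determine the column: rows `0, 2` trivially, and rows `0, 1` resp.
`1, 2` because `b < a₂ ≤ a₁` and `a < a₁` can be recovered from `(a + b) mod a₁`. Hence two
distinct columns agree in at most one row. A partition of `ℓ ≤ 3` columns into at most two
classes has at most `ℓ - 1` pairs of columns in distinct classes, and each such pair spoils at
most one of the three rows, leaving at least `3 - (ℓ - 1) = 4 - ℓ` separating rows.
-/

/-- The 3-row array of the lemma: column `(a,b)` has entries `a`, `(a+b) mod a₁`, `b`. -/
def blackA (a₁ a₂ : ℕ) : Fin 3 → Fin a₁ × Fin a₂ → ℕ :=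
  ![fun c => (c.1 : ℕ), fun c => ((c.1 : ℕ) + (c.2 : ℕ)) % a₁, fun c => (c.2 : ℕ)]

open Finset

section Separation

variable {R ι β κ : Type*} [Fintype R] [DecidableEq β] [DecidableEq κ] {ℓ : ℕ}

def separatingRows (A : R → ι → β) (cols : Fin ℓ → ι) (part : Fin ℓ → κ) : Finset R :=
  univ.filter fun r => ∀ i j, part i ≠ part j → A r (cols i) ≠ A r (cols j)

def crossPairs (part : Fin ℓ → κ) : Finset (Fin ℓ × Fin ℓ) :=
  univ.filter fun p => p.1 < p.2 ∧ part p.1 ≠ part p.2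

def agreeingRows (A : R → ι → β) (c d : ι) : Finset R :=
  univ.filter fun r => A r c = A r d

lemma card_agreeingRows_le_one {A : R → ι → β}
    (hA : ∀ r s c d, r ≠ s → A r c = A r d → A s c = A s d → c = d) {c d : ι} (hcd : c ≠ d) :
    #(agreeingRows A c d) ≤ 1 := by
  refine card_le_one.mpr fun r hr s hs => ?_
  by_contra hrs
  exact hcd (hA r s c d hrs (mem_filter.mp hr).2 (mem_filter.mp hs).2)

lemma compl_separatingRows_subset [DecidableEq R] (A : R → ι → β) (cols : Fin ℓ → ι)
    (part : Fin ℓ → κ) :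
    (separatingRows A cols part)ᶜ ⊆
      (crossPairs part).biUnion fun p => agreeingRows A (cols p.1) (cols p.2) := by
  intro r hr
  simp only [separatingRows, compl_filter, mem_filter, mem_univ, true_and] at hr
  push Not at hr
  obtain ⟨i, j, hij, hagree⟩ := hr
  simp only [mem_biUnion, crossPairs, agreeingRows, mem_filter, mem_univ, true_and]
  rcases lt_or_gt_of_ne (ne_of_apply_ne part hij) with hlt | hgt
  · exact ⟨(i, j), ⟨hlt, hij⟩, hagree⟩
  · exact ⟨(j, i), ⟨hgt, hij.symm⟩, hagree.symm⟩

lemma card_sub_card_crossPairs_le_card_separatingRows [DecidableEq R] {A : R → ι → β}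
    (hA : ∀ r s c d, r ≠ s → A r c = A r d → A s c = A s d → c = d)
    {cols : Fin ℓ → ι} (hcols : Function.Injective cols) (part : Fin ℓ → κ) :
    Fintype.card R - #(crossPairs part) ≤ #(separatingRows A cols part) := by
  have hspoiled : #(separatingRows A cols part)ᶜ ≤ #(crossPairs part) := by
    calc #(separatingRows A cols part)ᶜ
        ≤ #((crossPairs part).biUnion fun p => agreeingRows A (cols p.1) (cols p.2)) :=
          card_le_card (compl_separatingRows_subset A cols part)
      _ ≤ #(crossPairs part) * 1 := by
          refine card_biUnion_le_card_mul _ _ 1 fun p hp => card_agreeingRows_le_one hA ?_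
          exact hcols.ne (mem_filter.mp hp).2.1.ne
      _ = #(crossPairs part) := mul_one _
  rw [card_compl] at hspoiled
  omega

end Separation

lemma card_crossPairs_le {ℓ : ℕ} (hℓ : ℓ ≤ 3) (part : Fin ℓ → Fin (min 2 ℓ)) :
    #(crossPairs part) ≤ ℓ - 1 := by
  interval_cases ℓ <;> revert part <;> decide

lemma blackA_injective_of_two_rows {a₁ a₂ : ℕ} (h2 : a₂ ≤ a₁) (r s : Fin 3)
    (c d : Fin a₁ × Fin a₂) (hrs : r ≠ s) (hr : blackA a₁ a₂ r c = blackA a₁ a₂ r d)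
    (hs : blackA a₁ a₂ s c = blackA a₁ a₂ s d) : c = d := by
  obtain ⟨⟨x, hx⟩, ⟨y, hy⟩⟩ := c
  obtain ⟨⟨x', hx'⟩, ⟨y', hy'⟩⟩ := d
  have hy₁ : y < a₁ := hy.trans_le h2
  have hy₁' : y' < a₁ := hy'.trans_le h2
  have cancel_left : x = x' → (x + y) % a₁ = (x' + y') % a₁ → y = y' := by
    rintro rfl h
    exact (Nat.ModEq.add_left_cancel' x h).eq_of_lt_of_lt hy₁ hy₁'
  have cancel_right : y = y' → (x + y) % a₁ = (x' + y') % a₁ → x = x' := by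
    rintro rfl h
    exact (Nat.ModEq.add_right_cancel' y h).eq_of_lt_of_lt hx hx'
  fin_cases r <;> fin_cases s <;> simp_all [blackA]

theorem stmt_8_general (a₁ a₂ : ℕ) (h2 : a₂ ≤ a₁) :
    ∀ ℓ, 1 ≤ ℓ → ℓ ≤ 3 →
      ∀ cols : Fin ℓ → Fin a₁ × Fin a₂, Function.Injective cols →
        ∀ part : Fin ℓ → Fin (min 2 ℓ),
          4 - ℓ ≤ (Finset.univ.filter (fun r : Fin 3 =>
            ∀ i j, part i ≠ part j →
              blackA a₁ a₂ r (cols i) ≠ blackA a₁ a₂ r (cols j))).card := by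
  intro ℓ hℓ₁ hℓ₃ cols hcols part
  have hsep := card_sub_card_crossPairs_le_card_separatingRows
    (blackA_injective_of_two_rows h2) hcols part
  have hcross := card_crossPairs_le hℓ₃ part
  rw [Fintype.card_fin] at hsep
  change 4 - ℓ ≤ #(separatingRows (blackA a₁ a₂) cols part)
  omega

/-- for `a₁ ≥ a₂ ≥ 1` this array is a fractal `DHHF(3;a₁a₂,(a₁,a₁,a₂),3,2)`:
every partition of `ℓ ≤ 3` of its columns into `min(2,ℓ)` classes is separated by at least
`4-ℓ` rows. -/
theorem stmt_8 (a₁ a₂ : ℕ) (h1 : 1 ≤ a₂) (h2 : a₂ ≤ a₁) :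
    ∀ ℓ, 1 ≤ ℓ → ℓ ≤ 3 →
      ∀ cols : Fin ℓ → Fin a₁ × Fin a₂, Function.Injective cols →
        ∀ part : Fin ℓ → Fin (min 2 ℓ),
          4 - ℓ ≤ (Finset.univ.filter (fun r : Fin 3 =>
            ∀ i j, part i ≠ part j →
              blackA a₁ a₂ r (cols i) ≠ blackA a₁ a₂ r (cols j))).card :=
  stmt_8_general a₁ a₂ h2
end

section
/- Let A be a t × k array such that for every ℓ-set of columns (1 ≤ ℓ ≤ t) and every partition of those columns into min(p,ℓ) classes, at least t+1−ℓ rows separate that partition. Then for every row j, the array obtained by deleting row j has the analogous property with t replaced by t−1: every partition of ℓ ≤ t−1 columns into min(p, ℓ, t−1) classes is separated by at least t−ℓ of the remaining rows. -/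
/-! Since `ℓ ≤ t - 1`, we have `min p (min ℓ (t - 1)) = min p ℓ`, so every partition in the
new condition is one in the old condition, separated by at least `t + 1 - ℓ` rows; deleting
row `j` loses at most one of them. -/

theorem Finset.card_filter_sub_one_le_card_filter_ne_and {ι : Type*} [DecidableEq ι]
    (s : Finset ι) (P : ι → Prop) [DecidablePred P] (j : ι) :
    (s.filter P).card - 1 ≤ (s.filter fun r => r ≠ j ∧ P r).card := by
  have hErase : s.filter (fun r => r ≠ j ∧ P r) = (s.filter P).erase j := by
    ext r
    simp [and_left_comm]
  rw [hErase]
  exact Finset.pred_card_le_card_erase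

theorem separates_comp_injective_iff {ι κ ρ β γ α : Type*} (A : ρ → κ → α) (cols : ι → κ)
    (part : ι → β) {f : β → γ} (hf : Function.Injective f) (r : ρ) :
    (∀ i i', f (part i) ≠ f (part i') → A r (cols i) ≠ A r (cols i')) ↔
      ∀ i i', part i ≠ part i' → A r (cols i) ≠ A r (cols i') := by
  simp only [hf.ne_iff]

/-- the fractal separation-count property is preserved by deleting a row. -/
theorem stmt_9 {α : Type} [DecidableEq α] (t k p : ℕ) (A : Fin t → Fin k → α)
    (hA : ∀ ℓ, 1 ≤ ℓ → ℓ ≤ t →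
      ∀ cols : Fin ℓ → Fin k, Function.Injective cols →
        ∀ part : Fin ℓ → Fin (min p ℓ),
          t + 1 - ℓ ≤ (Finset.univ.filter (fun r : Fin t =>
            ∀ i j, part i ≠ part j → A r (cols i) ≠ A r (cols j))).card) :
    ∀ j : Fin t, ∀ ℓ, 1 ≤ ℓ → ℓ ≤ t - 1 →
      ∀ cols : Fin ℓ → Fin k, Function.Injective cols →
        ∀ part : Fin ℓ → Fin (min p (min ℓ (t - 1))),
          t - ℓ ≤ (Finset.univ.filter (fun r : Fin t => r ≠ j ∧
            ∀ i i', part i ≠ part i' → A r (cols i) ≠ A r (cols i'))).card := by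
  intro j ℓ hℓ₁ hℓt cols hcols part
  have hClasses : min p (min ℓ (t - 1)) = min p ℓ := by rw [min_eq_left hℓt]
  have hCast : Function.Injective (Fin.cast hClasses) := Fin.cast_injective hClasses
  have hOld := hA ℓ hℓ₁ (hℓt.trans (Nat.sub_le t 1)) cols hcols (Fin.cast hClasses ∘ part)
  simp only [Function.comp_apply, separates_comp_injective_iff A cols part hCast] at hOld
  have hDelete := Finset.card_filter_sub_one_le_card_filter_ne_and Finset.univ
    (fun r : Fin t => ∀ i i', part i ≠ part i' → A r (cols i) ≠ A r (cols i')) j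
  omega
end

section
/- Suppose a t × k array A is a PHHF(t;k,(v_1,...,v_t),t) with k > t ≥ 2, and ℓ ≥ 1. Let A_0,...,A_{ℓ−1} be copies of A with pairwise disjoint symbol sets in each row, and let B be the (t+1) × (ℓk) array obtained by concatenating A_0,...,A_{ℓ−1} and appending a final row containing in column (c,s) the symbol c (for 0 ≤ c < k, 0 ≤ s < ℓ). Then B is a PHHF(t+1; ℓk, (ℓv_1,...,ℓv_t, k), t+1): every (t+1)-set of columns of B has pairwise distinct entries in some row of B. -/
/-!
The first `t` rows of `B` record the pair (symbol of `A`, copy index), so each uses `l` times as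
many symbols as the corresponding row of `A`, and the last row uses the `k` column indices of `A`.
Given `t + 1` distinct columns of `B`, either their `A`-column indices are distinct, and the last
row separates them, or these indices form a set of at most `t` columns of `A`. Extending that set
to exactly `t` columns, some row of `A` is injective on it; the corresponding row of `B` then
separates the chosen columns, since two of them agreeing there share both `A`-column and copy.
-/

open Finset Function

theorem Finset.card_univ_image_prodMap_id {ι κ α : Type*} [Fintype ι] [Fintype κ] [DecidableEq α]
    [DecidableEq κ] (f : ι → α) :
    #(univ.image (Prod.map f (id : κ → κ))) = #(univ.image f) * Fintype.card κ := by
  rw [← univ_product_univ, prodMap_image_product, card_product, image_id, card_univ]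

theorem exists_injOn_of_card_le {ρ ι α : Type*} [Fintype ι] {t : ℕ} (A : ρ → ι → α)
    (hsep : ∀ cols : Fin t → ι, Injective cols → ∃ r, Injective fun i => A r (cols i))
    (ht : t ≤ Fintype.card ι) {S : Finset ι} (hS : #S ≤ t) : ∃ r, Set.InjOn (A r) S := by
  obtain ⟨D, hSD, -, hD⟩ := exists_subsuperset_card_eq (subset_univ S) hS (by simpa using ht)
  let e : Fin t ≃ D := (D.equivFinOfCardEq hD).symm
  obtain ⟨r, hr⟩ := hsep (fun i => e i) (Subtype.val_injective.comp e.injective)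
  refine ⟨r, Set.InjOn.mono (coe_subset.mpr hSD) fun x hx y hy hxy => ?_⟩
  simpa using @hr (e.symm ⟨x, hx⟩) (e.symm ⟨y, hy⟩) (by simpa using hxy)

theorem exists_injective_prodMap_of_not_injective_fst {ρ ι κ α : Type*} [Fintype ι]
    [DecidableEq ι] {t : ℕ} (A : ρ → ι → α)
    (hsep : ∀ cols : Fin t → ι, Injective cols → ∃ r, Injective fun i => A r (cols i))
    (ht : t ≤ Fintype.card ι) {cols : Fin (t + 1) → ι × κ} (hcols : Injective cols)
    (hfst : ¬ Injective fun i => (cols i).1) :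
    ∃ r, Injective fun i => (A r (cols i).1, (cols i).2) := by
  have hcard : #(univ.image fun i => (cols i).1) ≤ t := by
    have hne : #(univ.image fun i => (cols i).1) ≠ t + 1 := fun h => hfst <| by
      rw [← Set.injOn_univ, ← coe_univ, ← card_image_iff, h, card_univ, Fintype.card_fin]
    have := card_image_le (s := univ) (f := fun i => (cols i).1)
    simp only [card_univ, Fintype.card_fin] at this
    omega
  obtain ⟨r, hr⟩ := exists_injOn_of_card_le A hsep ht hcard
  refine ⟨r, fun i j hij => hcols (Prod.ext ?_ (Prod.ext_iff.mp hij).2)⟩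
  exact hr (by simp) (by simp) (Prod.ext_iff.mp hij).1

theorem stmt_11_general {α : Type} [DecidableEq α] (t k l : ℕ) (hk : t < k)
    (v : Fin t → ℕ) (A : Fin t → Fin k → α)
    (hw : ∀ i, (Finset.univ.image (A i)).card ≤ v i)
    (hsep : ∀ cols : Fin t → Fin k, Function.Injective cols →
      ∃ r : Fin t, Function.Injective fun i => A r (cols i))
    (B : Fin (t + 1) → Fin k × Fin l → (α × Fin l) ⊕ Fin k)
    (hB1 : ∀ (r : Fin t) (c : Fin k × Fin l), B r.castSucc c = Sum.inl (A r c.1, c.2))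
    (hB2 : ∀ c : Fin k × Fin l, B (Fin.last t) c = Sum.inr c.1) :
    (∀ r : Fin t, (Finset.univ.image (B r.castSucc)).card ≤ l * v r) ∧
    (Finset.univ.image (B (Fin.last t))).card ≤ k ∧
    ∀ cols : Fin (t + 1) → Fin k × Fin l, Function.Injective cols →
      ∃ r : Fin (t + 1), Function.Injective fun i => B r (cols i) := by
  refine ⟨fun r => ?_, ?_, fun cols hcols => ?_⟩
  · have hrow : B r.castSucc = Sum.inl ∘ Prod.map (A r) id := funext (hB1 r)
    rw [hrow, ← image_image, card_image_of_injective _ Sum.inl_injective,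
      card_univ_image_prodMap_id, Fintype.card_fin, mul_comm]
    exact Nat.mul_le_mul_left l (hw r)
  · have hlast : B (Fin.last t) = Sum.inr ∘ Prod.fst := funext hB2
    rw [hlast, ← image_image, card_image_of_injective _ Sum.inr_injective]
    simpa using card_le_univ (univ.image (Prod.fst : Fin k × Fin l → Fin k))
  · by_cases hfst : Injective fun i => (cols i).1
    · exact ⟨Fin.last t, fun i j hij => hfst (by simpa [hB2] using hij)⟩
    · obtain ⟨r, hr⟩ := exists_injective_prodMap_of_not_injective_fst A hsep
        (by simpa using hk.le) hcols hfst
      exact ⟨r.castSucc, fun i j hij => hr (by simpa [hB1] using hij)⟩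

/-- from a `PHHF(t;k,(v_1,...,v_t),t)` with `k > t ≥ 2` and `ℓ ≥ 1` symbol-disjoint
copies, concatenating the copies and appending a row recording the column index of the copy
yields a `PHHF(t+1; ℓk, (ℓv_1,...,ℓv_t,k), t+1)`. -/
theorem stmt_11 {α : Type} [DecidableEq α] (t k l : ℕ) (hk : t < k) (ht : 2 ≤ t)
    (hl : 1 ≤ l) (v : Fin t → ℕ) (A : Fin t → Fin k → α)
    (hw : ∀ i, (Finset.univ.image (A i)).card ≤ v i)
    (hsep : ∀ cols : Fin t → Fin k, Function.Injective cols →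
      ∃ r : Fin t, Function.Injective fun i => A r (cols i))
    (B : Fin (t + 1) → Fin k × Fin l → (α × Fin l) ⊕ Fin k)
    (hB1 : ∀ (r : Fin t) (c : Fin k × Fin l), B r.castSucc c = Sum.inl (A r c.1, c.2))
    (hB2 : ∀ c : Fin k × Fin l, B (Fin.last t) c = Sum.inr c.1) :
    (∀ r : Fin t, (Finset.univ.image (B r.castSucc)).card ≤ l * v r) ∧
    (Finset.univ.image (B (Fin.last t))).card ≤ k ∧
    ∀ cols : Fin (t + 1) → Fin k × Fin l, Function.Injective cols →
      ∃ r : Fin (t + 1), Function.Injective fun i => B r (cols i) :=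
  stmt_11_general t k l hk v A hw hsep B hB1 hB2
end

section
/- For all integers n ≥ 2 and κ ≥ 1, there exists a PHF(n; nκ, (n−1)κ+1, 2n−1): an n × nκ array on (n−1)κ+1 symbols in which every (2n−1)-set of columns has pairwise distinct entries in some row. -/
/-!
Split the `nκ` columns into `n` blocks of size `κ`. Row `r` gives every column of block `r` the
symbol `0` and the remaining `(n - 1)κ` columns pairwise distinct nonzero symbols. Among any
`2n - 1` columns some block contains at most one of them (pigeonhole), and in the row of that
block the chosen columns receive pairwise distinct symbols.
-/

/-- A `PHF(N;k,w,t)` exists. -/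
def PHFExists (N k w t : ℕ) : Prop :=
  ∃ A : Fin N → Fin k → Fin w,
    ∀ cols : Fin t → Fin k, Function.Injective cols →
      ∃ r : Fin N, Function.Injective fun i => A r (cols i)

lemma Function.Injective.comp_of_injOn_of_subsingleton {ι α β : Type*} {f : α → β} {g : ι → α}
    {p : α → Prop} (hg : g.Injective) (hf : Set.InjOn f {a | ¬p a})
    (hsep : ∀ a b, p a → ¬p b → f a ≠ f b) (hp : {i | p (g i)}.Subsingleton) :
    (f ∘ g).Injective := by
  intro i j hij
  by_cases hi : p (g i) <;> by_cases hj : p (g j)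
  · exact hp hi hj
  · exact absurd hij (hsep _ _ hi hj)
  · exact absurd hij.symm (hsep _ _ hj hi)
  · exact hg (hf hi hj hij)

namespace PHF

variable {n κ : ℕ}

theorem card_fst_ne (r : Fin n) : Fintype.card {c : Fin n × Fin κ // c.1 ≠ r} = (n - 1) * κ := by
  rw [Fintype.card_congr (Equiv.prodSubtypeFstEquivSubtypeProd (p := (· ≠ r)))]
  simp [Fintype.card_subtype_compl]

noncomputable def blockRow (r : Fin n) (c : Fin n × Fin κ) : Fin ((n - 1) * κ + 1) :=
  if h : c.1 = r then 0 else (Fintype.equivFinOfCardEq (card_fst_ne r) ⟨c, h⟩).succ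

theorem blockRow_eq_zero_iff {r : Fin n} {c : Fin n × Fin κ} : blockRow r c = 0 ↔ c.1 = r := by
  unfold blockRow
  split_ifs with h <;> simp [h, Fin.succ_ne_zero]

theorem blockRow_injOn (r : Fin n) : Set.InjOn (blockRow (κ := κ) r) {c | c.1 ≠ r} := by
  intro c hc d hd h
  simp only [blockRow, dif_neg (show ¬c.1 = r from hc), dif_neg (show ¬d.1 = r from hd),
    Fin.succ_inj, EmbeddingLike.apply_eq_iff_eq, Subtype.mk.injEq] at h
  exact h

end PHF

open PHF in
theorem stmt_15_general (n κ : ℕ) (hn : 2 ≤ n) :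
    PHFExists n (n * κ) ((n - 1) * κ + 1) (2 * n - 1) := by
  refine ⟨fun r c => blockRow r (finProdFinEquiv.symm c), fun cols hcols => ?_⟩
  obtain ⟨r, hr⟩ := Fintype.exists_card_fiber_lt_of_card_lt_mul (n := 2)
    (f := fun i => (finProdFinEquiv.symm (cols i)).1) (by simp only [Fintype.card_fin]; omega)
  refine ⟨r, Function.Injective.comp_of_injOn_of_subsingleton (f := blockRow r)
    (p := fun c => c.1 = r) (finProdFinEquiv.symm.injective.comp hcols) (blockRow_injOn r) ?_ ?_⟩
  · intro a b ha hb hab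
    exact hb (blockRow_eq_zero_iff.1 (hab ▸ blockRow_eq_zero_iff.2 ha))
  · intro i hi j hj
    exact Finset.card_le_one.1 (Nat.lt_succ_iff.1 hr) i (by simpa using hi) j (by simpa using hj)

/-- for all `n ≥ 2` and `κ ≥ 1`, a `PHF(n; nκ, (n-1)κ+1, 2n-1)` exists. -/
theorem stmt_15 (n κ : ℕ) (hn : 2 ≤ n) (hκ : 1 ≤ κ) :
    PHFExists n (n * κ) ((n - 1) * κ + 1) (2 * n - 1) :=
  stmt_15_general n κ hn
end

section
/- If a fractal PHHF(n−1; κ, (w_1,...,w_{n−1}), n−1) exists (with n−1 rows, strength n−1, row i using at most w_i symbols, and every ℓ-set of columns separated in at least n−ℓ rows for 1 ≤ ℓ ≤ n−1), then a PHF(n; nκ, κ + w_1 + ... + w_{n−1}, n+1) exists. -/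
/-!
Split the `n * κ` columns into `n` blocks of `κ`. In row `r` of the new array, block `r` receives
`κ` fresh pairwise distinct symbols, and every other block `j` copies row `j - r - 1 (mod n)` of
the fractal array `A` over an alphabet of its own. For fixed `j` the map `r ↦ j - r - 1` is a
bijection onto the rows of `A`, so a block holding `ℓ ≤ n - 1` of the `n + 1` chosen columns is
spoilt in at most `ℓ - 1` rows `r`. At least two blocks are hit unless one block holds `n` or more
columns (then its own row works), so at most `(n + 1) - 2` rows are spoilt in total.
-/

open Finset Function

theorem phfExists_of_injOn {N k w t : ℕ} {K β : Type*} (e : K ≃ Fin k) (F : Fin N → K → β)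
    (U : Finset β) (hF : ∀ r x, F r x ∈ U) (hU : #U ≤ w)
    (hsep : ∀ S : Finset K, #S = t → ∃ r, Set.InjOn (F r) S) : PHFExists N k w t := by
  classical
  let code : U ↪ Fin w := U.equivFin.toEmbedding.trans (Fin.castLEEmb hU)
  refine ⟨fun r q => code ⟨F r (e.symm q), hF r _⟩, fun cols hcols => ?_⟩
  have hcard : #(univ.image (e.symm ∘ cols)) = t := by
    rw [card_image_of_injective _ (e.symm.injective.comp hcols), card_fin]
  obtain ⟨r, hr⟩ := hsep _ hcard
  refine ⟨r, fun i i' h => hcols (e.symm.injective (hr (by simp) (by simp) ?_))⟩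
  simpa using code.injective h

theorem sum_le_of_le_tsub_one {ι : Type*} [Fintype ι] {M : ℕ} (ℓ b : ι → ℕ)
    (hℓ : ∀ j, ℓ j ≤ M + 1) (hsum : ∑ j, ℓ j = M + 2) (hb : ∀ j, b j ≤ ℓ j - 1) :
    ∑ j, b j ≤ M := by
  classical
  set supp := univ.filter fun j => ℓ j ≠ 0
  have hsupp : ∑ j, (ℓ j - 1) + #supp = M + 2 := by
    rw [card_filter, ← sum_add_distrib, ← hsum]
    exact sum_congr rfl fun j _ => by split_ifs <;> omega
  have htwo : 2 ≤ #supp := by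
    by_contra! h
    have : ∑ j ∈ supp, ℓ j ≤ #supp • (M + 1) := sum_le_card_nsmul _ _ _ fun j _ => hℓ j
    rw [sum_filter_ne_zero, hsum, smul_eq_mul] at this
    have := Nat.mul_le_mul_right (M + 1) (Nat.lt_succ_iff.1 h)
    omega
  have := sum_le_sum fun j (_ : j ∈ univ) => hb j
  omega

def IsFractal {α : Type*} [DecidableEq α] {m κ : ℕ} (A : Fin m → Fin κ → α) : Prop :=
  ∀ ℓ, 1 ≤ ℓ → ℓ ≤ m → ∀ cols : Fin ℓ → Fin κ, Injective cols →
    m + 1 - ℓ ≤ #(univ.filter fun r => Injective fun i => A r (cols i))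

open scoped Classical in
theorem IsFractal.card_not_injOn_le {α : Type*} [DecidableEq α] {m κ : ℕ}
    {A : Fin m → Fin κ → α} (hA : IsFractal A) (T : Finset (Fin κ)) (hT : #T ≤ m) :
    #(univ.filter fun i => ¬ Set.InjOn (A i) T) ≤ #T - 1 := by
  rcases T.eq_empty_or_nonempty with rfl | hne
  · simp
  have hgood := hA #T hne.card_pos hT (fun i => T.equivFin.symm i) (by
    intro i i' h; simpa using Subtype.ext h)
  have hiff : ∀ r, (Injective fun i => A r (T.equivFin.symm i)) ↔ Set.InjOn (A r) T := fun r =>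
    (T.equivFin.symm.injective_comp (fun x : T => A r x)).trans Set.injOn_iff_injective.symm
  simp only [hiff] at hgood
  have := card_filter_add_card_filter_not (s := univ) fun i => Set.InjOn (A i) T
  rw [card_univ, Fintype.card_fin] at this
  omega

section BlockArray

variable {m κ : ℕ} {α : Type*}

def blockRow {r j : Fin (m + 1)} (h : j ≠ r) : Fin m := (j - r).pred (sub_ne_zero.2 h)

theorem sub_succ_blockRow {r j : Fin (m + 1)} (h : j ≠ r) : j - (blockRow h).succ = r := by
  simp [blockRow]

theorem blockRow_right_injective {r j₁ j₂ : Fin (m + 1)} (h₁ : j₁ ≠ r) (h₂ : j₂ ≠ r)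
    (h : blockRow h₁ = blockRow h₂) : j₁ = j₂ :=
  sub_left_injective (Fin.pred_inj.1 h)

def blockArray (A : Fin m → Fin κ → α) (r : Fin (m + 1)) (x : Fin (m + 1) × Fin κ) :
    Fin κ ⊕ (Σ _ : Fin m, α) :=
  if h : x.1 = r then .inl x.2 else .inr ⟨blockRow h, A (blockRow h) x.2⟩

theorem blockArray_mem [DecidableEq α] (A : Fin m → Fin κ → α) (r : Fin (m + 1))
    (x : Fin (m + 1) × Fin κ) :
    blockArray A r x ∈
      (univ : Finset (Fin κ)).disjSum (univ.sigma fun i => univ.image (A i)) := by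
  unfold blockArray
  split_ifs <;> simp

noncomputable def blockFiber (S : Finset (Fin (m + 1) × Fin κ)) (j : Fin (m + 1)) :
    Finset (Fin κ) :=
  S.preimage (Prod.mk j) (Prod.mk_right_injective j).injOn

theorem sum_card_blockFiber (S : Finset (Fin (m + 1) × Fin κ)) :
    ∑ j, #(blockFiber S j) = #S := by
  rw [card_eq_sum_card_fiberwise (f := Prod.fst) (t := univ) fun _ _ => mem_univ _]
  refine sum_congr rfl fun j _ => card_nbij' (Prod.mk j) Prod.snd ?_ ?_ ?_ ?_
  · intro c hc; simpa [blockFiber] using hc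
  · rintro ⟨j', c⟩ hc
    obtain ⟨hc, rfl⟩ := mem_filter.1 hc
    simpa [blockFiber] using hc
  · intro c _; rfl
  · rintro ⟨j', c⟩ hc; simp_all

theorem injOn_blockArray (A : Fin m → Fin κ → α) (r : Fin (m + 1))
    (S : Finset (Fin (m + 1) × Fin κ))
    (hS : ∀ j (h : j ≠ r), Set.InjOn (A (blockRow h)) (blockFiber S j)) :
    Set.InjOn (blockArray A r) S := by
  rintro ⟨j, c⟩ hjc ⟨j', c'⟩ hjc' h
  by_cases hj : j = r <;> by_cases hj' : j' = r
  · simp_all [blockArray]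
  · simp [blockArray, hj, hj'] at h
  · simp [blockArray, hj, hj'] at h
  · obtain ⟨hrow, hA⟩ :
        blockRow hj = blockRow hj' ∧ A (blockRow hj) c = A (blockRow hj') c' := by
      simpa [blockArray, hj, hj'] using h
    obtain rfl := blockRow_right_injective hj hj' hrow
    rw [hS j hj (by simpa [blockFiber] using hjc) (by simpa [blockFiber] using hjc') hA]

theorem exists_injOn_blockArray [DecidableEq α] {A : Fin m → Fin κ → α} (hA : IsFractal A)
    (S : Finset (Fin (m + 1) × Fin κ)) (hS : #S = m + 2) :
    ∃ r, Set.InjOn (blockArray A r) S := by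
  classical
  set ℓ := fun j => #(blockFiber S j)
  have hsum : ∑ j, ℓ j = m + 2 := (sum_card_blockFiber S).trans hS
  by_cases hbig : ∃ j₀, m + 1 ≤ ℓ j₀
  · obtain ⟨j₀, hj₀⟩ := hbig
    refine ⟨j₀, injOn_blockArray A j₀ S fun j hj => ?_⟩
    have hpair : ℓ j₀ + ℓ j ≤ m + 2 := calc
      ℓ j₀ + ℓ j = ∑ x ∈ {j₀, j}, ℓ x := (sum_pair hj.symm).symm
      _ ≤ ∑ x, ℓ x := sum_le_sum_of_subset (subset_univ _)
      _ = m + 2 := hsum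
    have hsingle : ℓ j ≤ 1 := by omega
    exact Set.Subsingleton.injOn (fun a ha b hb => card_le_one.1 hsingle a ha b hb) _
  simp only [not_exists, not_le] at hbig
  set bad := fun j => univ.filter fun i => ¬ Set.InjOn (A i) (blockFiber S j)
  set excluded := fun j => (bad j).image fun i => j - i.succ
  have hbad : ∑ j, #(bad j) ≤ m := sum_le_of_le_tsub_one ℓ (fun j => #(bad j))
    (fun j => (hbig j).le) hsum fun j => hA.card_not_injOn_le _ (Nat.lt_succ_iff.1 (hbig j))
  have hexcl : #(univ.biUnion excluded) < #(univ : Finset (Fin (m + 1))) := calc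
    #(univ.biUnion excluded) ≤ ∑ j, #(excluded j) := card_biUnion_le
    _ ≤ ∑ j, #(bad j) := sum_le_sum fun j _ => card_image_le
    _ < #(univ : Finset (Fin (m + 1))) := by rw [card_univ, Fintype.card_fin]; omega
  obtain ⟨r, -, hr⟩ := exists_mem_notMem_of_card_lt_card hexcl
  refine ⟨r, injOn_blockArray A r S fun j hj => ?_⟩
  by_contra hnot
  exact hr (mem_biUnion.2 ⟨j, mem_univ _, mem_image.2
    ⟨blockRow hj, mem_filter.2 ⟨mem_univ _, hnot⟩, sub_succ_blockRow hj⟩⟩)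

end BlockArray

theorem phfExists_of_isFractal {α : Type*} [DecidableEq α] {m κ : ℕ} (w : Fin m → ℕ)
    (A : Fin m → Fin κ → α) (hw : ∀ i, #(univ.image (A i)) ≤ w i) (hA : IsFractal A) :
    PHFExists (m + 1) ((m + 1) * κ) (κ + ∑ i, w i) (m + 2) := by
  refine phfExists_of_injOn finProdFinEquiv (blockArray A) _ (blockArray_mem A) ?_
    (exists_injOn_blockArray hA)
  rw [card_disjSum, card_sigma, card_univ, Fintype.card_fin]
  gcongr with i
  exact hw i

theorem stmt_16_general {α : Type} [DecidableEq α] (n κ : ℕ)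
    (w : Fin (n - 1) → ℕ) (A : Fin (n - 1) → Fin κ → α)
    (hw : ∀ i, (Finset.univ.image (A i)).card ≤ w i)
    (hfrac : ∀ ℓ, 1 ≤ ℓ → ℓ ≤ n - 1 →
      ∀ cols : Fin ℓ → Fin κ, Function.Injective cols →
        n - ℓ ≤ (Finset.univ.filter (fun r : Fin (n - 1) =>
          Function.Injective fun i => A r (cols i))).card) :
    PHFExists n (n * κ) (κ + ∑ i, w i) (n + 1) := by
  cases n with
  | zero => exact ⟨fun r => r.elim0, fun cols _ => absurd (cols 0).isLt (by simp)⟩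
  | succ m => exact phfExists_of_isFractal w A hw hfrac

/-- if a fractal `PHHF(n-1;κ,(w_1,...,w_{n-1}),n-1)` exists (every `ℓ`-set of
columns is separated in at least `n-ℓ` rows), then a `PHF(n; nκ, κ+w_1+...+w_{n-1}, n+1)`
exists. -/
theorem stmt_16 {α : Type} [DecidableEq α] (n κ : ℕ) (hn : 2 ≤ n)
    (w : Fin (n - 1) → ℕ) (A : Fin (n - 1) → Fin κ → α)
    (hw : ∀ i, (Finset.univ.image (A i)).card ≤ w i)
    (hfrac : ∀ ℓ, 1 ≤ ℓ → ℓ ≤ n - 1 →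
      ∀ cols : Fin ℓ → Fin κ, Function.Injective cols →
        n - ℓ ≤ (Finset.univ.filter (fun r : Fin (n - 1) =>
          Function.Injective fun i => A r (cols i))).card) :
    PHFExists n (n * κ) (κ + ∑ i, w i) (n + 1) :=
  stmt_16_general n κ w A hw hfrac
end

section
/- Let A be an n × k array and suppose {c_1,...,c_t} is a t-set of columns not separated by any row of A (for each row some two of these columns agree). If the multigraph G on vertices {c_1,...,c_t}, formed by choosing for each row one agreeing pair among the columns as an edge, admits a proper colouring with colour classes C_1,...,C_p, then the partition {C_1,...,C_p} of {c_1,...,c_t} is not separated by any row of A; hence A is not a DHHF(n;k,·,t,p). -/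
theorem stmt_18_general {α : Type} (n k t p : ℕ)
    (A : Fin n → Fin k → α) (cols : Fin t → Fin k) (hc : Function.Injective cols)
    (e₁ e₂ : Fin n → Fin t)
    (he : ∀ r, e₁ r ≠ e₂ r ∧ A r (cols (e₁ r)) = A r (cols (e₂ r)))
    (part : Fin t → Fin p) (hcol : ∀ r, part (e₁ r) ≠ part (e₂ r)) :
    (∀ r : Fin n, ¬ ∀ i j, part i ≠ part j → A r (cols i) ≠ A r (cols j)) ∧
    ¬ ∀ cols' : Fin t → Fin k, Function.Injective cols' →
        ∀ part' : Fin t → Fin p, ∃ r : Fin n,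
          ∀ i j, part' i ≠ part' j → A r (cols' i) ≠ A r (cols' j) := by
  have not_separated : ∀ r : Fin n, ¬ ∀ i j, part i ≠ part j → A r (cols i) ≠ A r (cols j) :=
    fun r separates => separates (e₁ r) (e₂ r) (hcol r) (he r).2
  exact ⟨not_separated, fun isDHHF => (isDHHF cols hc part).elim not_separated⟩

/-- if a `t`-set of columns of `A` is not separated by any row, witnessed by a
choice, for each row `r`, of an agreeing pair `(e₁ r, e₂ r)` of these columns, and the
resulting multigraph admits a proper colouring `part` with `p` colours, then the colour-class
partition is not separated by any row of `A`; hence `A` is not a `DHHF(n;k,·,t,p)`. -/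
theorem stmt_18 {α : Type} [DecidableEq α] (n k t p : ℕ)
    (A : Fin n → Fin k → α) (cols : Fin t → Fin k) (hc : Function.Injective cols)
    (e₁ e₂ : Fin n → Fin t)
    (he : ∀ r, e₁ r ≠ e₂ r ∧ A r (cols (e₁ r)) = A r (cols (e₂ r)))
    (part : Fin t → Fin p) (hcol : ∀ r, part (e₁ r) ≠ part (e₂ r)) :
    (∀ r : Fin n, ¬ ∀ i j, part i ≠ part j → A r (cols i) ≠ A r (cols j)) ∧
    ¬ ∀ cols' : Fin t → Fin k, Function.Injective cols' →
        ∀ part' : Fin t → Fin p, ∃ r : Fin n,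
          ∀ i j, part' i ≠ part' j → A r (cols' i) ≠ A r (cols' j) :=
  stmt_18_general n k t p A cols hc e₁ e₂ he part hcol
end
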